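/- arXiv:math/0112129 — 5 statements merged into one kernel-verified Lean document; each statement's English description precedes it below -/
import Mathlib

section
/- Let Γ be a finitely generated group and let A be a torsion-free abelian normal subgroup of Γ of finite index. Then for any element g ∈ Γ, the centralizer C_Γ(g) = {x ∈ Γ : xg = gx} is infinite if and only if there exists an element a ∈ A with a ≠ 1 and g a g⁻¹ = a. -/
/-- Let Γ be a finitely generated group and let A be a torsion-free abelian
normal subgroup of Γ of finite index. Then for any element g ∈ Γ, the centralizer
C_Γ(g) = {x ∈ Γ : xg = gx} is infinite if and only if there exists a ∈ A with a ≠ 1 and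
g a g⁻¹ = a. -/
theorem stmt0 {Γ : Type*} [Group Γ] [Group.FG Γ] (A : Subgroup Γ) [A.Normal]
    (hA : ∀ a b : Γ, a ∈ A → b ∈ A → a * b = b * a)
    (htf : ∀ a : Γ, a ∈ A → a ≠ 1 → ¬IsOfFinOrder a)
    [A.FiniteIndex] (g : Γ) :
    {x : Γ | x * g = g * x}.Infinite ↔ ∃ a ∈ A, a ≠ 1 ∧ g * a * g⁻¹ = a := by
  constructor
  · intro h
    haveI : Infinite ({x : Γ | x * g = g * x} : Set Γ) := h.to_subtype
    set f : ({x : Γ | x * g = g * x} : Set Γ) → Γ ⧸ A := fun x => ((x : Γ) : Γ ⧸ A) with hf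
    obtain ⟨q, hq⟩ := Finite.exists_infinite_fiber f
    haveI := hq
    obtain ⟨⟨x, hx⟩, ⟨y, hy⟩, hne⟩ := exists_pair_ne ↥(f ⁻¹' {q})
    have hxy : ((x : Γ) : Γ ⧸ A) = ((y : Γ) : Γ ⧸ A) := by
      have hx' : f x = q := hx
      have hy' : f y = q := hy
      exact hx'.trans hy'.symm
    have hmem : (x : Γ)⁻¹ * (y : Γ) ∈ A := (QuotientGroup.eq).mp hxy
    refine ⟨(x : Γ)⁻¹ * (y : Γ), hmem, ?_, ?_⟩
    · intro hcon
      apply hne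
      have hxy2 : (x : Γ) = (y : Γ) := by
        have := inv_mul_eq_one.mp hcon
        exact this
      exact Subtype.ext (Subtype.ext hxy2)
    · have cx : Commute g (x : Γ) := (x.2 : (x:Γ) * g = g * (x:Γ)).symm
      have cy : Commute g (y : Γ) := (y.2 : (y:Γ) * g = g * (y:Γ)).symm
      exact mul_inv_eq_iff_eq_mul.mpr (cx.inv_right.mul_right cy).eq
  · rintro ⟨a, haA, hane, hag⟩
    have hcomm : a * g = g * a := (mul_inv_eq_iff_eq_mul.mp hag).symm
    apply Set.infinite_of_injective_forall_mem (f := fun n : ℤ => a ^ n)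
    · exact injective_zpow_iff_not_isOfFinOrder.mpr (htf a haA hane)
    · intro n
      show a ^ n * g = g * a ^ n
      exact (Commute.zpow_left (by exact hcomm) n)
end

section
/- Let Γ be a finitely generated group, A a torsion-free abelian normal subgroup of Γ of finite index, C_Γ(A) the centralizer of A in Γ, and Γ̄ = Γ/C_Γ(A). Let p be either 0 or a prime. Then every p-regular element of Γ has infinite centralizer in Γ if and only if for every p-regular element x of Γ̄ and every (equivalently, some) preimage g ∈ Γ of x, there exists a ∈ A with a ≠ 1 and g a g⁻¹ = a. -/
/-!
If `g` has finite image of order `n` prime to `p` in `Γ/C_Γ(A)`, then `g ^ n` centralizes `A`, and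
some power `g ^ k` lies in `A` because `A` has finite index. If `g ^ k ≠ 1` it is a nontrivial
element of `A` fixed by `g`. Otherwise `g` has finite order, and its `p'`-part `g ^ P` (with `P`
the `p`-part of the order of `g`, hence prime to `n`) is `p`-regular; its infinite centralizer
meets the finite-index subgroup `A` nontrivially, and an element of `A` commuting with both
`g ^ n` and `g ^ P` commutes with `g`. Conversely, a nontrivial fixed point of a `p`-regular `g`
in the torsion-free group `A` generates an infinite cyclic subgroup of the centralizer of `g`.
-/

namespace Subgroup

variable {G : Type*} [Group G]

theorem coe_centralizer_singleton (g : G) :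
    (centralizer {g} : Set G) = {x : G | x * g = g * x} :=
  Set.ext fun _ => mem_centralizer_singleton_iff

theorem mem_of_pow_mem_of_coprime (H : Subgroup G) {g : G} {m n : ℕ} (hmn : m.Coprime n)
    (hm : g ^ m ∈ H) (hn : g ^ n ∈ H) : g ∈ H := by
  have hg : g = (g ^ m) ^ m.gcdA n * (g ^ n) ^ m.gcdB n := by
    rw [← zpow_natCast, ← zpow_natCast, ← zpow_mul, ← zpow_mul, ← zpow_add,
      ← Nat.gcd_eq_gcd_ab, hmn, Nat.cast_one, zpow_one]
  rw [hg]
  exact H.mul_mem (H.zpow_mem hm _) (H.zpow_mem hn _)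

theorem exists_ne_one_mem_inf_of_infinite (H K : Subgroup G) [H.FiniteIndex]
    (hK : (K : Set G).Infinite) : ∃ a ∈ H ⊓ K, a ≠ 1 := by
  obtain ⟨x, hx, y, hy, hxy, hHxy⟩ := hK.exists_ne_map_eq_of_mapsTo
    (Set.mapsTo_univ (QuotientGroup.mk : G → G ⧸ H) _) Set.finite_univ
  exact ⟨x⁻¹ * y, ⟨QuotientGroup.eq.mp hHxy, K.mul_mem (K.inv_mem hx) hy⟩,
    fun h => hxy (inv_mul_eq_one.mp h)⟩

end Subgroup

open Subgroup

theorem IsOfFinOrder.exists_coprime_not_dvd_orderOf_pow {G : Type*} [Monoid G] {g : G}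
    (hg : IsOfFinOrder g) {p n : ℕ} (hp : p = 0 ∨ p.Prime) (hpn : ¬p ∣ n) :
    ∃ P, n.Coprime P ∧ ¬p ∣ orderOf (g ^ P) := by
  have hg0 : orderOf g ≠ 0 := hg.orderOf_pos.ne'
  rcases hp with rfl | hp
  · exact ⟨1, n.coprime_one_right, by simpa using hg0⟩
  · refine ⟨ordProj[p] (orderOf g), (hp.coprime_iff_not_dvd.mpr hpn).symm.pow_right _, ?_⟩
    rw [orderOf_pow' g (pow_ne_zero _ hp.ne_zero), Nat.gcd_eq_right (Nat.ordProj_dvd _ _)]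
    exact Nat.not_dvd_ordCompl hp hg0

theorem exists_ne_one_commute_of_infinite_centralizer {Γ : Type*} [Group Γ] (A : Subgroup Γ)
    [A.FiniteIndex] {p : ℕ} (hp : p = 0 ∨ p.Prime)
    (hinf : ∀ g : Γ, IsOfFinOrder g → ¬p ∣ orderOf g → (centralizer {g} : Set Γ).Infinite)
    {g : Γ} {n : ℕ} (hpn : ¬p ∣ n) (hgn : g ^ n ∈ centralizer (A : Set Γ)) :
    ∃ a ∈ A, a ≠ 1 ∧ Commute g a := by
  obtain ⟨k, hk, -, hgk⟩ := A.exists_pow_mem_of_index_ne_zero FiniteIndex.index_ne_zero g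
  by_cases hgk1 : g ^ k = 1
  · have hg : IsOfFinOrder g := isOfFinOrder_iff_pow_eq_one.mpr ⟨k, hk, hgk1⟩
    obtain ⟨P, hnP, hgP⟩ := hg.exists_coprime_not_dvd_orderOf_pow hp hpn
    obtain ⟨a, ⟨haA, haP⟩, ha1⟩ := A.exists_ne_one_mem_inf_of_infinite _ (hinf _ hg.pow hgP)
    refine ⟨a, haA, ha1, mem_centralizer_singleton_iff.mp ?_⟩
    refine (centralizer {a}).mem_of_pow_mem_of_coprime hnP ?_ ?_
    · exact mem_centralizer_singleton_iff.mpr (mem_centralizer_iff.mp hgn a haA).symm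
    · exact mem_centralizer_singleton_iff.mpr (mem_centralizer_singleton_iff.mp haP).symm
  · exact ⟨g ^ k, hgk, hgk1, (Commute.refl g).pow_right k⟩

theorem stmt1_general {Γ : Type*} [Group Γ] (A : Subgroup Γ)
    (htf : ∀ a : Γ, a ∈ A → a ≠ 1 → ¬IsOfFinOrder a)
    [A.FiniteIndex] (p : ℕ) (hp : p = 0 ∨ p.Prime)
    [(Subgroup.centralizer (A : Set Γ)).Normal] :
    (∀ g : Γ, IsOfFinOrder g → ¬ p ∣ orderOf g → {x : Γ | x * g = g * x}.Infinite) ↔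
      (∀ g : Γ,
        IsOfFinOrder (QuotientGroup.mk g : Γ ⧸ Subgroup.centralizer (A : Set Γ)) →
        ¬ p ∣ orderOf (QuotientGroup.mk g : Γ ⧸ Subgroup.centralizer (A : Set Γ)) →
        ∃ a ∈ A, a ≠ 1 ∧ g * a * g⁻¹ = a) := by
  simp only [← coe_centralizer_singleton]
  constructor
  · intro hinf g _ hpg
    have hgn : g ^ orderOf (g : Γ ⧸ centralizer (A : Set Γ)) ∈ centralizer (A : Set Γ) :=
      (QuotientGroup.eq_one_iff _).mp (by rw [QuotientGroup.mk_pow, pow_orderOf_eq_one])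
    obtain ⟨a, haA, ha1, hga⟩ := exists_ne_one_commute_of_infinite_centralizer A hp hinf hpg hgn
    exact ⟨a, haA, ha1, by rw [hga.eq, mul_inv_cancel_right]⟩
  · intro hfix g hg hpg
    obtain ⟨a, haA, ha1, hga⟩ := hfix g ((QuotientGroup.mk' _).isOfFinOrder hg)
      fun h => hpg (h.trans (orderOf_map_dvd (QuotientGroup.mk' _) g))
    have hag : a ∈ centralizer {g} :=
      mem_centralizer_singleton_iff.mpr (mul_inv_eq_iff_eq_mul.mp hga).symm
    exact (infinite_zpowers.mpr (htf a haA ha1)).mono (zpowers_le.mpr hag)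

/-- Let Γ be a finitely generated group, A a torsion-free abelian normal
subgroup of finite index, C_Γ(A) its centralizer and Γ̄ = Γ/C_Γ(A). Let p be 0 or a prime.
Then every p-regular element of Γ has infinite centralizer in Γ iff for every p-regular
element of Γ̄ and every preimage g ∈ Γ of it there exists a ∈ A with a ≠ 1 and g a g⁻¹ = a.
(p-regular: finite order not divisible by p; for p = 0, just finite order — note that for an
element of finite order, `¬ p ∣ orderOf g` with p = 0 is automatic, so the uniform phrasing
`IsOfFinOrder g ∧ ¬ p ∣ orderOf g` is correct in both cases.) -/
theorem stmt1 {Γ : Type*} [Group Γ] [Group.FG Γ] (A : Subgroup Γ) [A.Normal]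
    (hA : ∀ a b : Γ, a ∈ A → b ∈ A → a * b = b * a)
    (htf : ∀ a : Γ, a ∈ A → a ≠ 1 → ¬IsOfFinOrder a)
    [A.FiniteIndex] (p : ℕ) (hp : p = 0 ∨ p.Prime)
    [(Subgroup.centralizer (A : Set Γ)).Normal] :
    (∀ g : Γ, IsOfFinOrder g → ¬ p ∣ orderOf g → {x : Γ | x * g = g * x}.Infinite) ↔
      (∀ g : Γ,
        IsOfFinOrder (QuotientGroup.mk g : Γ ⧸ Subgroup.centralizer (A : Set Γ)) →
        ¬ p ∣ orderOf (QuotientGroup.mk g : Γ ⧸ Subgroup.centralizer (A : Set Γ)) →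
        ∃ a ∈ A, a ≠ 1 ∧ g * a * g⁻¹ = a) :=
  stmt1_general A htf p hp
end

section
/- Let H be a finite-dimensional Hopf algebra over a field k with counit ε and a nonzero left integral Λ ∈ H, and let X be a free left H-module. Then the invariants of X coincide with Λ·X, i.e., X^H = {x ∈ X : h·x = ε(h)·x for all h ∈ H} = Λ·X. -/
/-!
Let `Λ ≠ 0` be a left integral and write `Λ ↼ f = ∑ f(Λ₁) Λ₂` for `f ∈ H*`. The identity
`(S h ⊗ 1) Δ Λ = (1 ⊗ h) Δ Λ` gives `h (Λ ↼ f) = Λ ↼ f(S h · -)`, so the image of `f ↦ Λ ↼ f` is a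
left ideal. For a basis `(bᵢ)` with dual basis `(bᵢ*)` we have `Δ (Λ ↼ f) = ∑ bᵢ ⊗ (Λ ↼ f * bᵢ*)`
(convolution product), hence `f(Λ) • 1 = ε(Λ ↼ f) • 1 = ∑ S(bᵢ) (Λ ↼ f * bᵢ*)` lies in that ideal.
Choosing `f(Λ) = 1` shows that `f ↦ Λ ↼ f` is onto, hence bijective by counting dimensions
(Larson–Sweedler). It follows that `S` is bijective, and that the preimage `f` of a left integral
`t` satisfies `f(y x) = ε(y) f(x)`, so `f = f(1) ε` and `t = f(1) Λ`. The coordinates of an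
invariant element of a free module are left integrals, hence lie in `Λ H`.
-/

open TensorProduct WithConv

namespace TensorProduct

variable {R M N : Type*} [CommSemiring R] [AddCommMonoid M] [Module R M] [AddCommMonoid N]
  [Module R N]

/-- `sliceLeft z f = (f ⊗ id) z`. -/
noncomputable def sliceLeft : M ⊗[R] N →ₗ[R] Module.Dual R M →ₗ[R] N :=
  lift (LinearMap.smulRightₗ ∘ₗ Module.Dual.eval R M)

@[simp] lemma sliceLeft_tmul (m : M) (n : N) (f : Module.Dual R M) :
    sliceLeft (m ⊗ₜ n) f = f m • n := rfl

lemma eq_sum_basis_tmul_sliceLeft {ι : Type*} [Fintype ι] (B : Module.Basis ι R M)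
    (z : M ⊗[R] N) : z = ∑ i, B i ⊗ₜ sliceLeft z (B.coord i) := by
  classical
  conv_lhs => rw [← (equivFinsuppOfBasisLeft B).symm_apply_apply z,
    equivFinsuppOfBasisLeft_symm_apply, Finsupp.sum_fintype _ _ (by simp)]
  refine Finset.sum_congr rfl fun i _ ↦ congrArg _ ?_
  induction z using TensorProduct.induction_on <;> simp_all

variable {A : Type*} [Semiring A] [Algebra R A]

lemma sliceLeft_one_tmul_mul (h : A) (z : A ⊗[R] A) (f : Module.Dual R A) :
    sliceLeft ((1 ⊗ₜ h) * z) f = h * sliceLeft z f := by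
  induction z using TensorProduct.induction_on with
  | zero => simp
  | tmul x y => simp
  | add z w hz hw => simp [mul_add, hz, hw]

lemma sliceLeft_tmul_one_mul (a : A) (z : A ⊗[R] A) (f : Module.Dual R A) :
    sliceLeft ((a ⊗ₜ 1) * z) f = sliceLeft z (f ∘ₗ LinearMap.mulLeft R a) := by
  induction z using TensorProduct.induction_on with
  | zero => simp
  | tmul x y => simp
  | add z w hz hw => simp [mul_add, hz, hw]

end TensorProduct

namespace Coalgebra

variable {R C : Type*} [CommSemiring R] [AddCommMonoid C] [Module R C] [Coalgebra R C]

/-- `rightHit c f` is the right hit action `c ↼ f = ∑ f(c₁) c₂` of `C*` on `C`. -/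
noncomputable def rightHit : C →ₗ[R] Module.Dual R C →ₗ[R] C :=
  sliceLeft ∘ₗ comul

lemma Repr.rightHit_apply {ι : Type*} {c : C} (𝓡 : Repr R c ι) (f : Module.Dual R C) :
    rightHit c f = ∑ i ∈ 𝓡.index, f (𝓡.left i) • 𝓡.right i := by
  simp [rightHit, ← 𝓡.eq, map_sum]

lemma counit_rightHit (c : C) (f : Module.Dual R C) : counit (R := R) (rightHit c f) = f c := by
  have counital := congr(lift (LinearMap.mul R R ∘ₗ f) $(sum_tmul_counit_eq (ℛ R c)))
  simp only [map_sum, lift.tmul, LinearMap.comp_apply, LinearMap.mul_apply', mul_one] at counital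
  simp [(ℛ R c).rightHit_apply, map_sum, counital]

lemma rightHit_counit (c : C) : rightHit c (counit (R := R)) = c := by
  rw [(ℛ R c).rightHit_apply, sum_counit_smul]

lemma rightHit_rightHit (c : C) (f g : Module.Dual R C) :
    rightHit (rightHit c f) g = rightHit c (toConv f * toConv g).ofConv := by
  let 𝓡 := ℛ R c
  have coassoc := congr(lift (LinearMap.lsmul R C ∘ₗ f)
    (LinearMap.lTensor C (lift (LinearMap.lsmul R C ∘ₗ g))
      $(sum_tmul_tmul_eq 𝓡 (fun i ↦ ℛ R (𝓡.left i)) (fun i ↦ ℛ R (𝓡.right i)))))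
  simp only [map_sum, LinearMap.lTensor_tmul, lift.tmul, LinearMap.comp_apply,
    LinearMap.lsmul_apply] at coassoc
  rw [𝓡.rightHit_apply, 𝓡.rightHit_apply, map_sum, LinearMap.sum_apply]
  simp only [map_smul, LinearMap.smul_apply, (ℛ R (𝓡.right _)).rightHit_apply,
    (ℛ R (𝓡.left _)).convMul_apply, Finset.smul_sum, Finset.sum_smul, smul_smul] at coassoc ⊢
  exact coassoc.symm

lemma comul_eq_sum_basis_tmul_rightHit {ι : Type*} [Fintype ι] (B : Module.Basis ι R C) (c : C) :
    comul (R := R) c = ∑ i, B i ⊗ₜ rightHit c (B.coord i) :=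
  eq_sum_basis_tmul_sliceLeft B _

end Coalgebra

namespace HopfAlgebra

open Coalgebra Algebra.TensorProduct

section Semiring

variable {R A : Type*} [CommSemiring R] [Semiring A]

variable (R) in
def IsLeftIntegral [Bialgebra R A] (Λ : A) : Prop :=
  ∀ h : A, h * Λ = counit (R := R) h • Λ

lemma isLeftIntegral_repr_of_forall_smul_eq_counit_smul [Bialgebra R A] {X ι : Type*}
    [AddCommMonoid X] [Module A X] [Module R X] [IsScalarTower R A X] (b : Module.Basis ι A X)
    {x : X} (hx : ∀ h : A, h • x = counit (R := R) h • x) (i : ι) :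
    IsLeftIntegral R (b.repr x i) := by
  intro h
  have := congr(b.repr $(hx h) i)
  rwa [← algebraMap_smul A, map_smul, map_smul, Finsupp.smul_apply, Finsupp.smul_apply,
    smul_eq_mul, smul_eq_mul, ← Algebra.smul_def] at this

variable [HopfAlgebra R A]

/-- In Sweedler notation: `∑ (S h₁ ⊗ 1) Δ h₂ = 1 ⊗ h`. -/
lemma includeLeft_antipode_convMul_comul :
    toConv ((includeLeft : A →ₐ[R] A ⊗[R] A).toLinearMap ∘ₗ antipode R) * toConv (comul (R := R))
      = toConv (includeRight : A →ₐ[R] A ⊗[R] A).toLinearMap := by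
  have hL : toConv ((includeLeft : A →ₐ[R] A ⊗[R] A).toLinearMap ∘ₗ antipode R) *
      toConv (includeLeft : A →ₐ[R] A ⊗[R] A).toLinearMap = 1 := by
    have := LinearMap.algHom_comp_convMul_distrib (includeLeft : A →ₐ[R] A ⊗[R] A)
      (toConv (antipode R)) (toConv LinearMap.id)
    rw [LinearMap.antipode_mul_id] at this
    refine ofConv_injective (this.symm.trans ?_)
    ext c
    simp
  have hΔ : toConv (includeLeft : A →ₐ[R] A ⊗[R] A).toLinearMap *
      toConv (includeRight : A →ₐ[R] A ⊗[R] A).toLinearMap = toConv (comul (R := R)) := by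
    ext c
    simp [(ℛ R c).convMul_apply, ← (ℛ R c).eq]
  rw [← hΔ, ← mul_assoc, hL, one_mul]

variable {Λ : A}

lemma IsLeftIntegral.antipode_tmul_one_mul_comul (hΛ : IsLeftIntegral R Λ) (h : A) :
    (antipode R h ⊗ₜ[R] (1 : A)) * comul Λ = ((1 : A) ⊗ₜ h) * comul Λ := by
  let 𝓡 := ℛ R h
  set σ : WithConv (A →ₗ[R] A ⊗[R] A) :=
    toConv ((includeLeft : A →ₐ[R] A ⊗[R] A).toLinearMap ∘ₗ antipode R)
  have hσ1 := congr($(mul_one σ) h)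
  have hσΔ := congr($(includeLeft_antipode_convMul_comul (R := R) (A := A)) h)
  rw [𝓡.convMul_apply] at hσ1 hσΔ
  simp only [LinearMap.convOne_apply] at hσ1
  change ∑ i ∈ 𝓡.index, σ (𝓡.left i) * comul (𝓡.right i) = (1 : A) ⊗ₜ h at hσΔ
  calc (antipode R h ⊗ₜ[R] (1 : A)) * comul Λ
      = ∑ i ∈ 𝓡.index, σ (𝓡.left i) * (algebraMap R _ (counit (𝓡.right i)) * comul Λ) := by
        simp_rw [← mul_assoc, ← Finset.sum_mul, hσ1]
        rfl
    _ = ∑ i ∈ 𝓡.index, σ (𝓡.left i) * (comul (𝓡.right i) * comul Λ) := by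
        simp_rw [← Bialgebra.comul_mul, hΛ _, map_smul, Algebra.smul_def]
    _ = ((1 : A) ⊗ₜ h) * comul Λ := by
        simp_rw [← mul_assoc, ← Finset.sum_mul, hσΔ]

lemma IsLeftIntegral.mul_rightHit (hΛ : IsLeftIntegral R Λ) (h : A) (f : Module.Dual R A) :
    h * rightHit Λ f = rightHit Λ (f ∘ₗ LinearMap.mulLeft R (antipode R h)) := by
  rw [rightHit, LinearMap.comp_apply, ← sliceLeft_one_tmul_mul, ← hΛ.antipode_tmul_one_mul_comul,
    sliceLeft_tmul_one_mul]

end Semiring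

section FiniteDimensional

variable {k H : Type*} [Field k] [Ring H] [HopfAlgebra k H] [FiniteDimensional k H] {Λ : H}

lemma IsLeftIntegral.rightHit_surjective (hΛ : IsLeftIntegral k Λ) (hΛ0 : Λ ≠ 0) :
    Function.Surjective (rightHit (R := k) Λ) := by
  have mul_mem (h : H) {y : H} (hy : y ∈ LinearMap.range (rightHit (R := k) Λ)) :
      h * y ∈ LinearMap.range (rightHit (R := k) Λ) := by
    obtain ⟨f, rfl⟩ := hy
    exact ⟨_, (hΛ.mul_rightHit h f).symm⟩
  obtain ⟨f, hf⟩ := Module.Projective.exists_dual_eq_one k hΛ0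
  have one_mem : (1 : H) ∈ LinearMap.range (rightHit (R := k) Λ) := by
    have antipode_axiom := mul_antipode_rTensor_comul_apply (R := k) (rightHit Λ f)
    rw [counit_rightHit, hf, map_one,
      comul_eq_sum_basis_tmul_rightHit (Module.finBasis k H)] at antipode_axiom
    simp only [map_sum, LinearMap.rTensor_tmul, LinearMap.mul'_apply,
      rightHit_rightHit] at antipode_axiom
    rw [← antipode_axiom]
    exact Submodule.sum_mem _ fun i _ ↦ mul_mem _ ⟨_, rfl⟩
  intro y
  simpa using mul_mem y one_mem

lemma IsLeftIntegral.rightHit_injective (hΛ : IsLeftIntegral k Λ) (hΛ0 : Λ ≠ 0) :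
    Function.Injective (rightHit (R := k) Λ) :=
  (LinearMap.injective_iff_surjective_of_finrank_eq_finrank Subspace.dual_finrank_eq).mpr
    (hΛ.rightHit_surjective hΛ0)

lemma antipode_surjective_of_isLeftIntegral (hΛ : IsLeftIntegral k Λ) (hΛ0 : Λ ≠ 0) :
    Function.Surjective (antipode k (A := H)) := by
  refine LinearMap.injective_iff_surjective.mp ?_
  rw [← LinearMap.ker_eq_bot, LinearMap.ker_eq_bot']
  intro a ha
  obtain ⟨f, hf⟩ := hΛ.rightHit_surjective hΛ0 1
  have := hΛ.mul_rightHit a f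
  rwa [ha, LinearMap.mulLeft_zero_eq_zero, LinearMap.comp_zero, map_zero, hf, mul_one] at this

lemma IsLeftIntegral.exists_eq_smul (hΛ : IsLeftIntegral k Λ) (hΛ0 : Λ ≠ 0) {t : H}
    (ht : IsLeftIntegral k t) : ∃ d : k, t = d • Λ := by
  obtain ⟨f, rfl⟩ := hΛ.rightHit_surjective hΛ0 t
  have hfS (a x : H) : f (antipode k a * x) = counit a * f x := by
    have := hΛ.rightHit_injective hΛ0 <|
      (hΛ.mul_rightHit a f).symm.trans ((ht a).trans (map_smul _ _ _).symm)
    simpa using LinearMap.congr_fun this x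
  have hf : f = f 1 • counit := by
    ext y
    obtain ⟨a, rfl⟩ := antipode_surjective_of_isLeftIntegral hΛ hΛ0 y
    simpa [mul_comm] using hfS a 1
  refine ⟨f 1, ?_⟩
  conv_lhs => rw [hf]
  rw [map_smul, rightHit_counit]

end FiniteDimensional

end HopfAlgebra

lemma Module.Basis.exists_smul_eq_of_forall_repr_eq_mul {A M ι : Type*} [Semiring A]
    [AddCommMonoid M] [Module A M] (b : Module.Basis ι A M) {a : A} {x : M}
    (hx : ∀ i, ∃ c, b.repr x i = a * c) : ∃ y, a • y = x := by
  choose c hc using hx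
  refine ⟨∑ i ∈ (b.repr x).support, c i • b i, ?_⟩
  conv_rhs => rw [← b.linearCombination_repr x, Finsupp.linearCombination_apply, Finsupp.sum]
  simp_rw [Finset.smul_sum, smul_smul, hc]

universe u

/-- Let H be a finite-dimensional Hopf algebra over a field k with counit ε and
nonzero left integral Λ, and let X be a free left H-module. Then the invariants of X coincide
with Λ·X, i.e. {x : ∀ h, h • x = ε(h) • x} = Λ·X. -/
theorem stmt10 {k H : Type u} [Field k] [Ring H] [HopfAlgebra k H] [FiniteDimensional k H]
    (Λ : H) (hΛ0 : Λ ≠ 0)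
    (hint : ∀ h : H, h * Λ = Coalgebra.counit (R := k) h • Λ)
    (X : Type u) [AddCommGroup X] [Module H X] [Module k X] [IsScalarTower k H X]
    [Module.Free H X] :
    {x : X | ∀ h : H, h • x = Coalgebra.counit (R := k) h • x} =
      Set.range (fun x : X => Λ • x) := by
  ext x
  refine ⟨fun hx ↦ ?_, ?_⟩
  · let b := Module.Free.chooseBasis H X
    refine b.exists_smul_eq_of_forall_repr_eq_mul fun i ↦ ?_
    obtain ⟨d, hd⟩ := HopfAlgebra.IsLeftIntegral.exists_eq_smul hint hΛ0
      (HopfAlgebra.isLeftIntegral_repr_of_forall_smul_eq_counit_smul b hx i)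
    exact ⟨algebraMap k H d, by rw [hd, Algebra.smul_def, Algebra.commutes]⟩
  · rintro ⟨y, rfl⟩ h
    dsimp only
    rw [smul_smul, hint h, smul_assoc]
end

section
/- Let k be a field of characteristic p > 0, let G be a nontrivial finite p-group acting by automorphisms on a finitely generated torsion-free abelian group A, and assume the action has trivial stabilizers away from the identity, i.e., for every a ∈ A with a ≠ 1, the only g ∈ G with g·a = a is g = 1. Let Λ = Σ_{g∈G} g ∈ kG act on the group algebra kA. Then the quotient k-vector space (kA)^G / Λ·kA is one-dimensional over k. -/
/-!
Since `p` divides `|G|`, every orbit sum `Σ_g g·r` has coefficient `|G| · r(1) = 0` at the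
identity, while `1 ∈ (kA)^G` has coefficient `1` there. Conversely, the action on `A \ {1}` is
free, so an invariant `r` with `r(1) = 0` is a sum of orbit sums of single terms `r(a) • a`, one
per orbit in its support. Hence `r ↦ r(1)` induces an isomorphism `(kA)^G / Λ·kA ≃ k`.
-/

universe u

/-- The action of `g : G` on the group algebra `kA`, induced by an action
`φ : G →* MulAut A` on the group `A`, as a `k`-algebra endomorphism. -/
noncomputable def gAct (k : Type u) {A G : Type u} [Field k] [Group A] [Group G]
    (φ : G →* MulAut A) (g : G) :
    MonoidAlgebra k A →ₐ[k] MonoidAlgebra k A :=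
  MonoidAlgebra.mapDomainAlgHom k k (φ g)

/-- The invariant subalgebra `(kA)^G` of the group algebra `kA`. -/
def invAlg (k : Type u) {A G : Type u} [Field k] [Group A] [Group G]
    (φ : G →* MulAut A) : Subalgebra k (MonoidAlgebra k A) where
  carrier := {r | ∀ g : G, gAct k φ g r = r}
  mul_mem' := fun {a b} ha hb g => by rw [map_mul, ha g, hb g]
  one_mem' := fun g => map_one _
  add_mem' := fun {a b} ha hb g => by rw [map_add, ha g, hb g]
  zero_mem' := fun g => map_zero _
  algebraMap_mem' := fun c g => (gAct k φ g).commutes c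

/-- The orbit-sum operator `r ↦ Λ·r = Σ_{g ∈ G} g·r` on the group algebra `kA`,
i.e. the action of the integral `Λ = Σ_{g ∈ G} g` of `kG`. -/
noncomputable def orbitSum (k : Type u) {A G : Type u} [Field k] [Group A] [Group G]
    [Fintype G] (φ : G →* MulAut A) :
    MonoidAlgebra k A →ₗ[k] MonoidAlgebra k A :=
  ∑ g : G, (gAct k φ g).toLinearMap

theorem IsPGroup.natCast_card_eq_zero {p : ℕ} [Fact p.Prime] {k : Type*} [AddMonoidWithOne k]
    [CharP k p] {G : Type*} [Group G] [Finite G] [Nontrivial G] (hpG : IsPGroup p G) :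
    (Nat.card G : k) = 0 :=
  (CharP.cast_eq_zero_iff k p _).mpr <|
    hpG.card_eq_or_dvd.resolve_left Finite.one_lt_card.ne'

section OrbitSum

open MonoidAlgebra

variable {k A G : Type u} [Field k] [Group A] [Group G] (φ : G →* MulAut A)

theorem coeff_gAct (g : G) (r : MonoidAlgebra k A) (b : A) :
    (gAct k φ g r).coeff b = r.coeff ((φ g).symm b) := by
  conv_lhs => rw [← (φ g).apply_symm_apply b]
  exact Finsupp.mapDomain_apply (φ g).injective _ _

theorem gAct_mul (g h : G) (r : MonoidAlgebra k A) :
    gAct k φ (g * h) r = gAct k φ g (gAct k φ h r) := by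
  ext b
  simp [coeff_gAct, MulAut.mul_def]

theorem coeff_apply_of_mem_invAlg {r : MonoidAlgebra k A} (hr : r ∈ invAlg k φ) (g : G) (a : A) :
    r.coeff (φ g a) = r.coeff a := by
  rw [← hr g, coeff_gAct, MulEquiv.symm_apply_apply, hr g]

variable [Fintype G]

theorem orbitSum_apply (r : MonoidAlgebra k A) : orbitSum k φ r = ∑ g : G, gAct k φ g r := by
  simp [orbitSum]

theorem coeff_orbitSum (r : MonoidAlgebra k A) (b : A) :
    (orbitSum k φ r).coeff b = ∑ g : G, r.coeff ((φ g).symm b) := by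
  simp only [orbitSum_apply, coeff_sum, Finsupp.finsetSum_apply, coeff_gAct]

theorem orbitSum_mem_invAlg (r : MonoidAlgebra k A) : orbitSum k φ r ∈ invAlg k φ := by
  intro g
  simp only [orbitSum_apply, map_sum, ← gAct_mul]
  exact Fintype.sum_bijective (g * ·) (Group.mulLeft_bijective g) _ _ fun _ => rfl

theorem coeff_one_orbitSum (hG : (Fintype.card G : k) = 0) (r : MonoidAlgebra k A) :
    (orbitSum k φ r).coeff 1 = 0 := by
  simp [coeff_orbitSum, hG]

theorem coeff_orbitSum_single_of_forall_ne {a b : A} (hb : ∀ g, φ g a ≠ b) (c : k) :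
    (orbitSum k φ (single a c)).coeff b = 0 := by
  classical
  refine (coeff_orbitSum φ _ b).trans (Finset.sum_eq_zero fun g _ => ?_)
  rw [coeff_single, Finsupp.single_apply, if_neg (mt (φ g).eq_symm_apply.mp (hb g))]

theorem coeff_orbitSum_single_apply
    (hfree : ∀ a : A, a ≠ 1 → ∀ g : G, φ g a = a → g = 1) {a : A} (ha : a ≠ 1) (c : k) (h : G) :
    (orbitSum k φ (single a c)).coeff (φ h a) = c := by
  classical
  rw [coeff_orbitSum, Finset.sum_eq_single h, coeff_single, Finsupp.single_apply,
    MulEquiv.symm_apply_apply, if_pos rfl]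
  · intro g _ hgh
    rw [coeff_single, Finsupp.single_apply, if_neg (mt (φ g).eq_symm_apply.mp ?_)]
    intro hga
    have : g⁻¹ * h = 1 := hfree a ha _ (by simp [MulAut.mul_def, ← hga])
    exact hgh (inv_mul_eq_one.mp this)
  · simp

theorem mem_range_orbitSum_of_coeff_one_eq_zero
    (hfree : ∀ a : A, a ≠ 1 → ∀ g : G, φ g a = a → g = 1) {r : MonoidAlgebra k A}
    (hr : r ∈ invAlg k φ) (h1 : r.coeff 1 = 0) : r ∈ LinearMap.range (orbitSum k φ) := by
  classical
  induction hn : r.coeff.support.card using Nat.strong_induction_on generalizing r with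
  | _ n ih =>
  rcases eq_or_ne r 0 with rfl | hr0
  · exact zero_mem _
  obtain ⟨a, ha⟩ := Finsupp.support_nonempty_iff.mpr (mt coeff_eq_zero.mp hr0)
  have hra : r.coeff a ≠ 0 := Finsupp.mem_support_iff.mp ha
  have ha1 : a ≠ 1 := by rintro rfl; exact hra h1
  -- subtracting the orbit sum of `r(a) • a` kills `r` on the orbit of `a` and changes nothing else
  set t := orbitSum k φ (single a (r.coeff a))
  have ht_off : ∀ b, (∀ g, φ g a ≠ b) → t.coeff b = 0 := fun b hb =>
    coeff_orbitSum_single_of_forall_ne φ hb _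
  have ht_a : t.coeff a = r.coeff a := by
    simpa using coeff_orbitSum_single_apply φ hfree ha1 (r.coeff a) 1
  have hsupp : (r - t).coeff.support ⊆ r.coeff.support.erase a := by
    intro b hb
    rw [Finsupp.mem_support_iff, coeff_sub, Finsupp.sub_apply] at hb
    refine Finset.mem_erase.mpr ⟨?_, Finsupp.mem_support_iff.mpr ?_⟩
    · rintro rfl
      exact hb (by rw [ht_a, sub_self])
    · intro hrb
      have hb_off : ∀ g, φ g a ≠ b := by
        rintro g rfl
        exact hra (by rwa [coeff_apply_of_mem_invAlg φ hr] at hrb)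
      exact hb (by rw [hrb, ht_off b hb_off, sub_zero])
  have hrt : r - t ∈ LinearMap.range (orbitSum k φ) := by
    refine ih _ ?_ (sub_mem hr (orbitSum_mem_invAlg φ _)) ?_ rfl
    · exact hn ▸ (Finset.card_le_card hsupp).trans_lt (Finset.card_erase_lt_of_mem ha)
    · rw [coeff_sub, Finsupp.sub_apply, h1, ht_off 1 fun g hg => ha1 (by simpa using hg),
        sub_zero]
  simpa [t] using add_mem hrt (LinearMap.mem_range_self (orbitSum k φ) (single a (r.coeff a)))

theorem mem_range_orbitSum_iff (hG : (Fintype.card G : k) = 0)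
    (hfree : ∀ a : A, a ≠ 1 → ∀ g : G, φ g a = a → g = 1) {r : MonoidAlgebra k A}
    (hr : r ∈ invAlg k φ) : r ∈ LinearMap.range (orbitSum k φ) ↔ r.coeff 1 = 0 :=
  ⟨by rintro ⟨s, rfl⟩; exact coeff_one_orbitSum φ hG s,
    mem_range_orbitSum_of_coeff_one_eq_zero φ hfree hr⟩

end OrbitSum

theorem stmt12_general {k : Type u} {p : ℕ} [Field k] (hp : p.Prime) [CharP k p]
    {A G : Type u} [CommGroup A]
    [Group G] [Fintype G] [Nontrivial G] (hpG : IsPGroup p G)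
    (φ : G →* MulAut A)
    (hfree : ∀ a : A, a ≠ 1 → ∀ g : G, φ g a = a → g = 1) :
    Module.finrank k
      (↥(Subalgebra.toSubmodule (invAlg k φ)) ⧸
        Submodule.comap (Subalgebra.toSubmodule (invAlg k φ)).subtype
          (LinearMap.range (orbitSum k φ))) = 1 := by
  have : Fact p.Prime := ⟨hp⟩
  have hG : (Fintype.card G : k) = 0 := by
    simpa [Nat.card_eq_fintype_card] using hpG.natCast_card_eq_zero (k := k)
  set M := Subalgebra.toSubmodule (invAlg k φ)
  let ε : M →ₗ[k] k :=
    Finsupp.lapply 1 ∘ₗ (MonoidAlgebra.coeffLinearEquiv k).toLinearMap ∘ₗ M.subtype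
  have hε : Function.Surjective ε := fun c =>
    ⟨c • ⟨1, (invAlg k φ).one_mem⟩, by simp [ε, MonoidAlgebra.coeffLinearEquiv]⟩
  have hker : LinearMap.ker ε = Submodule.comap M.subtype (LinearMap.range (orbitSum k φ)) := by
    ext ⟨r, hr⟩
    simp [ε, MonoidAlgebra.coeffLinearEquiv, mem_range_orbitSum_iff φ hG hfree hr]
  rw [← hker, (ε.quotKerEquivOfSurjective hε).finrank_eq, Module.finrank_self]

/-- Let k be a field of characteristic p > 0, G a nontrivial finite p-group
acting by automorphisms on a finitely generated torsion-free abelian group A with trivial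
stabilizers away from the identity. Then (kA)^G / Λ·kA is one-dimensional over k, where
Λ·kA is the image of the orbit-sum operator. -/
theorem stmt12 {k : Type u} {p : ℕ} [Field k] (hp : p.Prime) [CharP k p]
    {A G : Type u} [CommGroup A] [Group.FG A]
    (htf : ∀ a : A, a ≠ 1 → ¬IsOfFinOrder a)
    [Group G] [Fintype G] [Nontrivial G] (hpG : IsPGroup p G)
    (φ : G →* MulAut A)
    (hfree : ∀ a : A, a ≠ 1 → ∀ g : G, φ g a = a → g = 1) :
    Module.finrank k
      (↥(Subalgebra.toSubmodule (invAlg k φ)) ⧸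
        Submodule.comap (Subalgebra.toSubmodule (invAlg k φ)).subtype
          (LinearMap.range (orbitSum k φ))) = 1 :=
  stmt12_general hp hpG φ hfree
end

section
/- Let Γ be a finitely generated group and A a torsion-free abelian normal subgroup of Γ of finite index. Then A ∩ Z(Γ) ≠ {1}, where Z(Γ) is the center of Γ, if and only if there exists a surjective group homomorphism Γ → ℤ. -/
/-!
If `z ≠ 1` is central and lies in `A`, the transfer `Γ → A` sends `z` to `z ^ [Γ : A] ≠ 1`.
As `A` is free abelian of finite rank, some coordinate of this element is nonzero, which gives a
nontrivial map `Γ → ℤ`, and its image is again infinite cyclic.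
Conversely, a surjection `f : Γ → ℤ` cannot kill the finite-index subgroup `A`; for `a ∈ A` with
`f a ≠ 0`, the norm `∏_{gA} g a g⁻¹` is a central element of `A` on which `f` takes the value
`[Γ : A] • f a ≠ 0`.
-/

open Subgroup

theorem exists_surjective_int_of_apply_ne_one {G : Type*} [Group G]
    (F : G →* Multiplicative ℤ) {x : G} (hx : F x ≠ 1) :
    ∃ f : G →* Multiplicative ℤ, Function.Surjective f := by
  have : Infinite F.range :=
    ((infinite_zpowers.mpr (not_isOfFinOrder_of_isMulTorsionFree hx)).mono
      (zpowers_le.mpr (F.mem_range.mpr ⟨x, rfl⟩))).to_subtype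
  exact ⟨intCyclicMulEquiv.symm.toMonoidHom.comp F.rangeRestrict,
    intCyclicMulEquiv.symm.surjective.comp F.rangeRestrict_surjective⟩

theorem exists_monoidHom_int_apply_ne_one {A : Type*} [CommGroup A] [Group.FG A]
    [IsMulTorsionFree A] {a : A} (ha : a ≠ 1) : ∃ ψ : A →* Multiplicative ℤ, ψ a ≠ 1 := by
  have : Module.Finite ℤ (Additive A) := Module.Finite.iff_addGroup_fg.mpr inferInstance
  obtain ⟨φ, hφ⟩ := Module.Projective.exists_dual_ne_zero ℤ (x := Additive.ofMul a) ha
  exact ⟨AddMonoidHom.toMultiplicativeRight φ.toAddMonoidHom, hφ⟩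

theorem MonoidHom.not_le_ker_of_surjective {G M : Type*} [Group G] [Group M] [Infinite M]
    {f : G →* M} (hf : Function.Surjective f) (H : Subgroup G) [H.FiniteIndex] :
    ¬H ≤ f.ker := fun hle => by
  have : f.ker.FiniteIndex := finiteIndex_of_le hle
  have hindex := index_ker f
  rw [f.range_eq_top.mpr hf, Nat.card_congr topEquiv.toEquiv, Nat.card_eq_zero_of_infinite]
    at hindex
  exact FiniteIndex.index_ne_zero hindex

open scoped IsMulCommutative

theorem MonoidHom.transfer_eq_pow_of_mem_center {G B : Type*} [Group G] [CommGroup B]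
    {H : Subgroup G} [H.Normal] [H.FiniteIndex] (ϕ : H →* B) {g : G}
    (hg : g ∈ center G) : transfer ϕ g = ϕ ⟨g ^ H.index, H.pow_index_mem g⟩ :=
  transfer_eq_pow ϕ g fun k g₀ _ => by
    rw [mul_assoc, ← mem_center_iff.mp (pow_mem hg k) g₀, inv_mul_cancel_left]

namespace Subgroup

variable {G : Type*} [Group G] (A : Subgroup G) [A.Normal] [IsMulCommutative A]

-- `gA ↦ g a g⁻¹` is well defined because `A` is abelian.
def conjByCoset (a : A) : G ⧸ A → A :=
  Quotient.lift (fun g : G => MulAut.conjNormal g a) fun g₁ g₂ h => by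
    have hcomm : g₁⁻¹ * g₂ * a = a * (g₁⁻¹ * g₂) :=
      congrArg Subtype.val (mul_comm (⟨_, QuotientGroup.leftRel_apply.mp h⟩ : A) a)
    ext
    calc (MulAut.conjNormal g₁ a : G) = g₁ * (a * (g₁⁻¹ * g₂)) * g₂⁻¹ := by
          rw [MulAut.conjNormal_apply]; group
      _ = g₁ * (g₁⁻¹ * g₂ * a) * g₂⁻¹ := by rw [hcomm]
      _ = MulAut.conjNormal g₂ a := by rw [MulAut.conjNormal_apply]; group

theorem coe_conjByCoset_mk (a : A) (g : G) : (A.conjByCoset a g : G) = g * a * g⁻¹ :=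
  MulAut.conjNormal_apply g a

theorem coe_conjByCoset_smul (a : A) (x : G) (q : G ⧸ A) :
    (A.conjByCoset a (x • q) : G) = x * A.conjByCoset a q * x⁻¹ := by
  induction q using QuotientGroup.induction_on with
  | H g =>
    rw [MulAction.Quotient.smul_coe, smul_eq_mul, coe_conjByCoset_mk, coe_conjByCoset_mk]
    group

variable [A.FiniteIndex]

noncomputable def cosetNorm (a : A) : A :=
  letI := A.fintypeQuotientOfFiniteIndex
  ∏ q, A.conjByCoset a q

theorem cosetNorm_mem_center (a : A) : (A.cosetNorm a : G) ∈ center G := by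
  let := A.fintypeQuotientOfFiniteIndex
  refine mem_center_iff.mpr fun x => mul_inv_eq_iff_eq_mul.mp ?_
  calc x * A.cosetNorm a * x⁻¹ = (MulAut.conjNormal x (A.cosetNorm a) : G) :=
        (MulAut.conjNormal_apply x _).symm
    _ = (∏ q, A.conjByCoset a (x • q) : A) := by
      simp only [cosetNorm, map_prod]
      congr 1
      exact Finset.prod_congr rfl fun q _ => Subtype.ext (A.coe_conjByCoset_smul a x q).symm
    _ = A.cosetNorm a :=
      congrArg Subtype.val (Equiv.prod_comp (MulAction.toPerm x) (A.conjByCoset a))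

theorem map_cosetNorm {M : Type*} [CommGroup M] (f : G →* M) (a : A) :
    f (A.cosetNorm a) = f a ^ A.index := by
  let := A.fintypeQuotientOfFiniteIndex
  have hconj : ∀ q, f (A.conjByCoset a q) = f a := fun q => by
    induction q using QuotientGroup.induction_on with
    | H g => rw [coe_conjByCoset_mk, map_mul, map_mul, map_inv, mul_inv_cancel_comm]
  rw [cosetNorm, ← coe_subtype, ← MonoidHom.comp_apply, map_prod]
  simp only [MonoidHom.comp_apply, coe_subtype, hconj, Finset.prod_const, Finset.card_univ,
    index_eq_card, Nat.card_eq_fintype_card]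

end Subgroup

/-- Let Γ be a finitely generated group and A a torsion-free abelian normal
subgroup of Γ of finite index. Then A ∩ Z(Γ) ≠ {1} iff there is a surjective group
homomorphism Γ → ℤ. -/
theorem stmt14 {Γ : Type*} [Group Γ] [Group.FG Γ] (A : Subgroup Γ) [A.Normal]
    (hA : ∀ a b : Γ, a ∈ A → b ∈ A → a * b = b * a)
    (htf : ∀ a : Γ, a ∈ A → a ≠ 1 → ¬IsOfFinOrder a)
    [A.FiniteIndex] :
    A ⊓ Subgroup.center Γ ≠ ⊥ ↔ ∃ f : Γ →* Multiplicative ℤ, Function.Surjective f := by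
  have : IsMulCommutative A := ⟨⟨fun a b => Subtype.ext (hA a b a.2 b.2)⟩⟩
  have : IsMulTorsionFree A := .of_not_isOfFinOrder fun a ha hfin =>
    htf a a.2 (by simpa using ha) (Submonoid.isOfFinOrder_coe.mpr hfin)
  have hn : A.index ≠ 0 := FiniteIndex.index_ne_zero
  constructor
  · intro h
    obtain ⟨z, ⟨hzA, hzC⟩, hz⟩ := (A ⊓ center Γ).bot_or_exists_ne_one.resolve_left h
    let T := MonoidHom.transfer (MonoidHom.id A)
    have hTz : T z ≠ 1 := by
      have hTz_eq : T z = (⟨z, hzA⟩ : A) ^ A.index :=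
        MonoidHom.transfer_eq_pow_of_mem_center _ hzC
      rw [hTz_eq, ne_eq, pow_eq_one_iff_left hn]
      exact fun h1 => hz (congrArg Subtype.val h1)
    obtain ⟨ψ, hψ⟩ := exists_monoidHom_int_apply_ne_one hTz
    exact exists_surjective_int_of_apply_ne_one (ψ.comp T) hψ
  · rintro ⟨f, hf⟩
    obtain ⟨a, ha, hfa⟩ := SetLike.not_le_iff_exists.mp (MonoidHom.not_le_ker_of_surjective hf A)
    have hN : (A.cosetNorm ⟨a, ha⟩ : Γ) ≠ 1 := fun h1 => hfa <| by
      rw [MonoidHom.mem_ker, ← pow_eq_one_iff_left hn, ← A.map_cosetNorm f ⟨a, ha⟩, h1, map_one]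
    exact ne_bot_iff_exists_ne_one.mpr
      ⟨⟨_, (A.cosetNorm _).2, A.cosetNorm_mem_center _⟩, fun h1 => hN (congrArg Subtype.val h1)⟩
end
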